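/- arXiv:2105.05691 — 2 statements merged into one kernel-verified Lean document; each statement's English description precedes it below -/
import Mathlib

section
/- Let (G,d) be a p-uniformly convex space with constant c > 0, D ⊂ G, T0: D → G pointwise almost α-firmly nonexpansive at y with constant α₀ and violation ε₀, and T1: T0(D) → G pointwise almost α-firmly nonexpansive at y with constant α₁ and violation ε₁, where y ∈ Fix T0 ∩ Fix T1. Then T1 ∘ T0 is pointwise almost α-firmly nonexpansive at y on D with violation ε₀ + ε₁ + ε₀ε₁ and constant ᾱ = (α₀ + α₁ − 2α₀α₁) / ((c/2)(1 − α₀ − α₁ + α₀α₁) + α₀ + α₁ − 2α₀α₁). -/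
/-!
Put `u = d(x, T₀x)`, `v = d(T₀x, T₁T₀x)`, `w = d(x, T₁T₀x)` and `κᵢ = (1 - αᵢ)/αᵢ`. Chaining the
two hypotheses bounds `d(T₁T₀x, y)^p` by `(1 + ε₀)(1 + ε₁) d(x, y)^p - (c/2)(κ₀ u^p + κ₁ v^p)`.
Uniform convexity along the geodesic from `x` to `T₁T₀x`, seen from `T₀x` at time
`κ₁/(κ₀ + κ₁)`, gives `κ₀ u^p + κ₁ v^p ≥ (c/2) κ₀κ₁/(κ₀ + κ₁) w^p`, and
`(c/2) κ₀κ₁/(κ₀ + κ₁)` is exactly `(1 - ᾱ)/ᾱ`.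
-/

open Set

section

variable {G : Type*} [MetricSpace G]

def PUniformlyConvex (geo : G → G → ℝ → G) (p c : ℝ) : Prop :=
  ∀ (x y z : G), ∀ t ∈ Icc (0:ℝ) 1,
    dist z (geo x y t) ^ p
      ≤ (1 - t) * dist z x ^ p + t * dist z y ^ p - c / 2 * t * (1 - t) * dist x y ^ p

/-- The paper's inequality at a fixed point `y` of `T`, where `ψ_T(x, y) = (c/2) d(x, T x)^p`. -/
def AlmostFirmlyNonexpansiveAt (p c α ε : ℝ) (T : G → G) (D : Set G) (y : G) : Prop :=
  ∀ x ∈ D, dist (T x) y ^ p ≤ (1 + ε) * dist x y ^ p - (1 - α) / α * (c / 2 * dist x (T x) ^ p)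

noncomputable def compConst (c α₀ α₁ : ℝ) : ℝ :=
  (α₀ + α₁ - 2 * α₀ * α₁) / (c / 2 * (1 - α₀ - α₁ + α₀ * α₁) + α₀ + α₁ - 2 * α₀ * α₁)

theorem PUniformlyConvex.weighted_dist_rpow_le {geo : G → G → ℝ → G} {p c : ℝ}
    (hcvx : PUniformlyConvex geo p c) {k₀ k₁ : ℝ} (hk₀ : 0 < k₀) (hk₁ : 0 < k₁) (x z w : G) :
    c / 2 * (k₀ * k₁ / (k₀ + k₁)) * dist x w ^ p
      ≤ k₀ * dist z x ^ p + k₁ * dist z w ^ p := by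
  have hk : 0 < k₀ + k₁ := add_pos hk₀ hk₁
  have ht : k₁ / (k₀ + k₁) ∈ Icc (0:ℝ) 1 :=
    ⟨by positivity, (div_le_one hk).2 (by linarith)⟩
  have hmid := hcvx x w z _ ht
  have hmid_nonneg : 0 ≤ dist z (geo x w (k₁ / (k₀ + k₁))) ^ p :=
    Real.rpow_nonneg dist_nonneg p
  have hone_sub : 1 - k₁ / (k₀ + k₁) = k₀ / (k₀ + k₁) := by field_simp; ring
  rw [hone_sub] at hmid
  have key : c / 2 * (k₁ / (k₀ + k₁)) * (k₀ / (k₀ + k₁)) * dist x w ^ p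
      ≤ k₀ / (k₀ + k₁) * dist z x ^ p + k₁ / (k₀ + k₁) * dist z w ^ p := by
    linarith
  calc c / 2 * (k₀ * k₁ / (k₀ + k₁)) * dist x w ^ p
      = (k₀ + k₁) * (c / 2 * (k₁ / (k₀ + k₁)) * (k₀ / (k₀ + k₁)) * dist x w ^ p) := by
        field_simp
    _ ≤ (k₀ + k₁) * (k₀ / (k₀ + k₁) * dist z x ^ p + k₁ / (k₀ + k₁) * dist z w ^ p) :=
        mul_le_mul_of_nonneg_left key hk.le
    _ = k₀ * dist z x ^ p + k₁ * dist z w ^ p := by field_simp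

theorem one_sub_compConst_div_compConst {c α₀ α₁ : ℝ} (hc : 0 ≤ c)
    (hα₀ : α₀ ∈ Ioo (0:ℝ) 1) (hα₁ : α₁ ∈ Ioo (0:ℝ) 1) :
    (1 - compConst c α₀ α₁) / compConst c α₀ α₁
      = c / 2 * ((1 - α₀) / α₀ * ((1 - α₁) / α₁) / ((1 - α₀) / α₀ + (1 - α₁) / α₁)) := by
  obtain ⟨hα₀0, hα₀1⟩ := hα₀
  obtain ⟨hα₁0, hα₁1⟩ := hα₁
  have hS : 0 < α₀ + α₁ - 2 * α₀ * α₁ := by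
    nlinarith [mul_pos hα₀0 (sub_pos.2 hα₁1), mul_pos hα₁0 (sub_pos.2 hα₀1)]
  have hB : 0 < c / 2 * (1 - α₀ - α₁ + α₀ * α₁) + α₀ + α₁ - 2 * α₀ * α₁ := by
    nlinarith [mul_nonneg hc (mul_nonneg (sub_pos.2 hα₀1).le (sub_pos.2 hα₁1).le)]
  rw [compConst, one_sub_div hB.ne', div_div_div_cancel_right₀ hB.ne']
  field_simp
  ring

theorem AlmostFirmlyNonexpansiveAt.comp {geo : G → G → ℝ → G} {p c α₀ α₁ ε₀ ε₁ : ℝ}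
    {T0 T1 : G → G} {D : Set G} {y : G} (hcvx : PUniformlyConvex geo p c) (hc : 0 ≤ c)
    (hα₀ : α₀ ∈ Ioo (0:ℝ) 1) (hα₁ : α₁ ∈ Ioo (0:ℝ) 1) (hε₁ : 0 ≤ ε₁)
    (h0 : AlmostFirmlyNonexpansiveAt p c α₀ ε₀ T0 D y)
    (h1 : AlmostFirmlyNonexpansiveAt p c α₁ ε₁ T1 (T0 '' D) y) :
    AlmostFirmlyNonexpansiveAt p c (compConst c α₀ α₁) (ε₀ + ε₁ + ε₀ * ε₁) (T1 ∘ T0) D y := by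
  intro x hx
  have hk₀ : 0 < (1 - α₀) / α₀ := div_pos (sub_pos.2 hα₀.2) hα₀.1
  have hk₁ : 0 < (1 - α₁) / α₁ := div_pos (sub_pos.2 hα₁.2) hα₁.1
  have hT0 := h0 x hx
  have hT1 := h1 (T0 x) (mem_image_of_mem T0 hx)
  have hgeo := hcvx.weighted_dist_rpow_le hk₀ hk₁ x (T0 x) (T1 (T0 x))
  have hu : 0 ≤ dist x (T0 x) ^ p := Real.rpow_nonneg dist_nonneg p
  rw [dist_comm (T0 x) x] at hgeo
  rw [one_sub_compConst_div_compConst hc hα₀ hα₁, Function.comp_apply]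
  have hc2 : 0 ≤ c / 2 := by positivity
  linarith [mul_le_mul_of_nonneg_left hT0 (by linarith : (0:ℝ) ≤ 1 + ε₁),
    mul_le_mul_of_nonneg_left hgeo hc2, mul_nonneg (mul_nonneg hε₁ hk₀.le) (mul_nonneg hc2 hu)]

end

theorem pafne_comp_explicit_constant_general {G : Type*} [MetricSpace G] (p c : ℝ)
    (hc : 0 < c)
    (geo : G → G → ℝ → G)
    (hcvx : ∀ (x y z : G), ∀ t ∈ Set.Icc (0:ℝ) 1,
      dist z (geo x y t) ^ p
        ≤ (1 - t) * dist z x ^ p + t * dist z y ^ p - c / 2 * t * (1 - t) * dist x y ^ p)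
    (D : Set G) (T0 T1 : G → G) (y : G)
    (α₀ α₁ ε₀ ε₁ : ℝ)
    (hα₀ : α₀ ∈ Set.Ioo (0:ℝ) 1) (hα₁ : α₁ ∈ Set.Ioo (0:ℝ) 1)
    (hε₁ : 0 ≤ ε₁)
    (h0 : ∀ x ∈ D, dist (T0 x) y ^ p
        ≤ (1 + ε₀) * dist x y ^ p - (1 - α₀) / α₀ * (c / 2 * dist x (T0 x) ^ p))
    (h1 : ∀ z ∈ T0 '' D, dist (T1 z) y ^ p
        ≤ (1 + ε₁) * dist z y ^ p - (1 - α₁) / α₁ * (c / 2 * dist z (T1 z) ^ p)) :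
    ∀ x ∈ D, dist (T1 (T0 x)) y ^ p
      ≤ (1 + (ε₀ + ε₁ + ε₀ * ε₁)) * dist x y ^ p
        - (1 - (α₀ + α₁ - 2 * α₀ * α₁)
              / (c / 2 * (1 - α₀ - α₁ + α₀ * α₁) + α₀ + α₁ - 2 * α₀ * α₁))
          / ((α₀ + α₁ - 2 * α₀ * α₁)
              / (c / 2 * (1 - α₀ - α₁ + α₀ * α₁) + α₀ + α₁ - 2 * α₀ * α₁))
          * (c / 2 * dist x (T1 (T0 x)) ^ p) :=
  AlmostFirmlyNonexpansiveAt.comp hcvx hc.le hα₀ hα₁ hε₁ h0 h1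

/-- Composition of pointwise almost `α`-firmly nonexpansive mappings at a common fixed
point `y` is pointwise almost `α`-firmly nonexpansive with the explicit constant `ᾱ` and
violation `ε₀ + ε₁ + ε₀ε₁`. -/
theorem pafne_comp_explicit_constant {G : Type*} [MetricSpace G] (p c : ℝ)
    (hp : 1 < p) (hc : 0 < c)
    (geo : G → G → ℝ → G)
    (hcvx : ∀ (x y z : G), ∀ t ∈ Set.Icc (0:ℝ) 1,
      dist z (geo x y t) ^ p
        ≤ (1 - t) * dist z x ^ p + t * dist z y ^ p - c / 2 * t * (1 - t) * dist x y ^ p)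
    (D : Set G) (T0 T1 : G → G) (y : G) (hyD : y ∈ D)
    (hy0 : T0 y = y) (hy1 : T1 y = y)
    (α₀ α₁ ε₀ ε₁ : ℝ)
    (hα₀ : α₀ ∈ Set.Ioo (0:ℝ) 1) (hα₁ : α₁ ∈ Set.Ioo (0:ℝ) 1)
    (hε₀ : 0 ≤ ε₀) (hε₁ : 0 ≤ ε₁)
    (h0 : ∀ x ∈ D, dist (T0 x) y ^ p
        ≤ (1 + ε₀) * dist x y ^ p - (1 - α₀) / α₀ * (c / 2 * dist x (T0 x) ^ p))
    (h1 : ∀ z ∈ T0 '' D, dist (T1 z) y ^ p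
        ≤ (1 + ε₁) * dist z y ^ p - (1 - α₁) / α₁ * (c / 2 * dist z (T1 z) ^ p)) :
    ∀ x ∈ D, dist (T1 (T0 x)) y ^ p
      ≤ (1 + (ε₀ + ε₁ + ε₀ * ε₁)) * dist x y ^ p
        - (1 - (α₀ + α₁ - 2 * α₀ * α₁)
              / (c / 2 * (1 - α₀ - α₁ + α₀ * α₁) + α₀ + α₁ - 2 * α₀ * α₁))
          / ((α₀ + α₁ - 2 * α₀ * α₁)
              / (c / 2 * (1 - α₀ - α₁ + α₀ * α₁) + α₀ + α₁ - 2 * α₀ * α₁))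
          * (c / 2 * dist x (T1 (T0 x)) ^ p) :=
  pafne_comp_explicit_constant_general p c hc geo hcvx D T0 T1 y α₀ α₁ ε₀ ε₁ hα₀ hα₁ hε₁ h0 h1
end

section
/- Let (G,d) be a geodesic space with symmetric perpendicularity, f proper convex lsc, λ > 0, x ∈ G, y := prox^p_{f,λ}(x), and x̄ ∈ argmin f. Then the metric projection of x onto the geodesic segment [x̄, y] equals y; consequently [x̄,y] ⊥_y [x,y], and by symmetric perpendicularity [x,y] ⊥_y [x̄,y], which gives d(y, x̄) ≤ d(x, x̄). -/
/-!
Moving from `y` towards a minimizer `x̄` of `f` does not increase `f` (convexity), so by the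
minimality of `y` for `f + c · d(·, x)^p` it cannot decrease the distance to `x`: `y` is the
projection of `x` onto `[y, x̄]`. The triangle inequality through a point of `[y, x]` turns this
into `[y, x] ⊥_y [y, x̄]`; symmetry of perpendicularity and the endpoints of the segments then
give `d(y, x̄) ≤ d(x, x̄)`.
-/

/-- The geodesic segment from `q` to `a` is perpendicular at `q` to the geodesic segment
from `q` to `b`. -/
def Perp {G : Type*} [MetricSpace G] (geo : G → G → ℝ → G) (q a b : G) : Prop :=
  ∀ s ∈ Set.Icc (0:ℝ) 1, ∀ t ∈ Set.Icc (0:ℝ) 1,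
    dist (geo q a s) q ≤ dist (geo q a s) (geo q b t)

section Geodesic

variable {G : Type*} [MetricSpace G] {geo : G → G → ℝ → G}

theorem geo_one
    (hgeo1 : ∀ (x y : G), ∀ t ∈ Set.Icc (0:ℝ) 1, dist (geo x y t) y = (1 - t) * dist x y)
    (x y : G) : geo x y 1 = y := by
  simpa using hgeo1 x y 1 (by norm_num)

theorem Perp.dist_le
    (hgeo1 : ∀ (x y : G), ∀ t ∈ Set.Icc (0:ℝ) 1, dist (geo x y t) y = (1 - t) * dist x y)
    {q a b : G} (h : Perp geo q a b) : dist q a ≤ dist b a := by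
  have hone : (1:ℝ) ∈ Set.Icc (0:ℝ) 1 := by norm_num
  simpa [geo_one hgeo1, dist_comm] using h 1 hone 1 hone

theorem perp_of_forall_dist_le_dist_geo
    (hgeo0 : ∀ (x y : G), ∀ t ∈ Set.Icc (0:ℝ) 1, dist x (geo x y t) = t * dist x y)
    (hgeo1 : ∀ (x y : G), ∀ t ∈ Set.Icc (0:ℝ) 1, dist (geo x y t) y = (1 - t) * dist x y)
    {x y b : G} (hproj : ∀ t ∈ Set.Icc (0:ℝ) 1, dist x y ≤ dist x (geo y b t)) :
    Perp geo y x b := by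
  intro s hs t ht
  have hy : dist (geo y x s) y = s * dist x y := by
    rw [dist_comm, hgeo0 y x s hs, dist_comm]
  have hx : dist x (geo y x s) = (1 - s) * dist x y := by
    rw [dist_comm, hgeo1 y x s hs, dist_comm]
  have := (hproj t ht).trans (dist_triangle x (geo y x s) (geo y b t))
  linarith

end Geodesic

theorem apply_geo_le_of_forall_le {G : Type*} {geo : G → G → ℝ → G} {f : G → ℝ}
    (hconv : ∀ (x y : G), ∀ t ∈ Set.Icc (0:ℝ) 1, f (geo x y t) ≤ (1 - t) * f x + t * f y)
    {xbar : G} (hxbar : ∀ z : G, f xbar ≤ f z) (y : G) {t : ℝ}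
    (ht : t ∈ Set.Icc (0:ℝ) 1) :
    f (geo y xbar t) ≤ f y := by
  have := mul_le_mul_of_nonneg_left (hxbar y) ht.1
  linarith [hconv y xbar t ht]

theorem dist_le_of_le_of_isMin_add_dist_rpow {G : Type*} [MetricSpace G] {f : G → ℝ} {p c : ℝ}
    (hp : 0 < p) (hc : 0 < c) {x y u : G}
    (hy : ∀ z : G, f y + c * dist y x ^ p ≤ f z + c * dist z x ^ p) (hu : f u ≤ f y) :
    dist x y ≤ dist x u := by
  have hpow : dist y x ^ p ≤ dist u x ^ p := le_of_mul_le_mul_left (by linarith [hy u]) hc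
  rw [dist_comm x y, dist_comm x u]
  exact (Real.rpow_le_rpow_iff dist_nonneg dist_nonneg hp).mp hpow

theorem prox_projection_perpendicular_general {G : Type*} [MetricSpace G] (p lam : ℝ)
    (hp : 1 < p) (hlam : 0 < lam)
    (geo : G → G → ℝ → G)
    (hgeo0 : ∀ (x y : G), ∀ t ∈ Set.Icc (0:ℝ) 1, dist x (geo x y t) = t * dist x y)
    (hgeo1 : ∀ (x y : G), ∀ t ∈ Set.Icc (0:ℝ) 1, dist (geo x y t) y = (1 - t) * dist x y)
    (hsym : ∀ q a b : G, Perp geo q a b → Perp geo q b a)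
    (f : G → ℝ)
    (hconv : ∀ (x y : G), ∀ t ∈ Set.Icc (0:ℝ) 1, f (geo x y t) ≤ (1 - t) * f x + t * f y)
    (x y xbar : G)
    (hy : ∀ z : G, f y + 1 / (p * lam ^ (p - 1)) * dist y x ^ p
        ≤ f z + 1 / (p * lam ^ (p - 1)) * dist z x ^ p)
    (hxbar : ∀ z : G, f xbar ≤ f z) :
    (∀ t ∈ Set.Icc (0:ℝ) 1, dist x y ≤ dist x (geo y xbar t)) ∧
    Perp geo y xbar x ∧ Perp geo y x xbar ∧ dist y xbar ≤ dist x xbar := by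
  have hproj : ∀ t ∈ Set.Icc (0:ℝ) 1, dist x y ≤ dist x (geo y xbar t) := fun t ht =>
    dist_le_of_le_of_isMin_add_dist_rpow (by linarith) (by positivity) hy
      (apply_geo_le_of_forall_le hconv hxbar y ht)
  have hperp : Perp geo y x xbar := perp_of_forall_dist_le_dist_geo hgeo0 hgeo1 hproj
  have hperp' : Perp geo y xbar x := hsym y x xbar hperp
  exact ⟨hproj, hperp', hperp, hperp'.dist_le hgeo1⟩

/-- For `y = prox^p_{f,λ}(x)` and `x̄ ∈ argmin f`, the projection of `x` onto the segment
`[x̄, y]` is `y`; consequently `[x̄,y] ⊥_y [x,y]`, by symmetric perpendicularity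
`[x,y] ⊥_y [x̄,y]`, and hence `d(y,x̄) ≤ d(x,x̄)`. -/
theorem prox_projection_perpendicular {G : Type*} [MetricSpace G] (p lam : ℝ)
    (hp : 1 < p) (hlam : 0 < lam)
    (geo : G → G → ℝ → G)
    (hgeo0 : ∀ (x y : G), ∀ t ∈ Set.Icc (0:ℝ) 1, dist x (geo x y t) = t * dist x y)
    (hgeo1 : ∀ (x y : G), ∀ t ∈ Set.Icc (0:ℝ) 1, dist (geo x y t) y = (1 - t) * dist x y)
    (hsym : ∀ q a b : G, Perp geo q a b → Perp geo q b a)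
    (f : G → ℝ) (hlsc : LowerSemicontinuous f)
    (hconv : ∀ (x y : G), ∀ t ∈ Set.Icc (0:ℝ) 1, f (geo x y t) ≤ (1 - t) * f x + t * f y)
    (x y xbar : G)
    (hy : ∀ z : G, f y + 1 / (p * lam ^ (p - 1)) * dist y x ^ p
        ≤ f z + 1 / (p * lam ^ (p - 1)) * dist z x ^ p)
    (hxbar : ∀ z : G, f xbar ≤ f z) :
    (∀ t ∈ Set.Icc (0:ℝ) 1, dist x y ≤ dist x (geo y xbar t)) ∧
    Perp geo y xbar x ∧ Perp geo y x xbar ∧ dist y xbar ≤ dist x xbar :=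
  prox_projection_perpendicular_general p lam hp hlam geo hgeo0 hgeo1 hsym f hconv x y xbar hy hxbar
end
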